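/- Let (G_n) be a sequence of simple graphs where G_n has n vertices, and suppose each G_n has a dominating vertex x_n. Then for every fixed t ≥ 0, lim_{n→∞} P_{G_n,t}^{x_n}(x_n) = 1 (strong localization at dominating vertices). -/

import Mathlib

open Matrix Filter

/-- CTQW transition probability on a finite simple graph. -/
noncomputable def ctqwP {V : Type*} [Fintype V] [DecidableEq V]
    (G : SimpleGraph V) [DecidableRel G.Adj] (t : ℝ) (x y : V) : ℝ :=
  ‖(NormedSpace.exp ((Complex.I * t) • (G.lapMatrix ℂ))) x y‖ ^ 2

/-!
If `x` is adjacent to every other of the `n` vertices, then `L e_x = n e_x - 𝟙` and `L 𝟙 = 0`, so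
`e_x = (e_x - 𝟙/n) + 𝟙/n` splits into eigenvectors for the eigenvalues `n` and `0`. Hence
`(e^{itL})_{xx} = e^{itn} (1 - 1/n) + 1/n`, a point at distance at most `2/n` from the unit
circle, and its squared modulus tends to `1` for every real `t`.
-/

open NormedSpace

namespace Matrix

variable {𝕂 n : Type*} [RCLike 𝕂] [Fintype n] [DecidableEq n]

theorem pow_mulVec_of_mulVec_eq_smul {A : Matrix n n 𝕂} {v : n → 𝕂} {c : 𝕂}
    (h : A *ᵥ v = c • v) (k : ℕ) : (A ^ k) *ᵥ v = c ^ k • v := by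
  induction k with
  | zero => simp
  | succ k ih => rw [pow_succ, ← mulVec_mulVec, h, mulVec_smul, ih, smul_smul, pow_succ']

open scoped Matrix.Norms.Operator in
theorem exp_mulVec_of_mulVec_eq_smul {A : Matrix n n 𝕂} {v : n → 𝕂} {c : 𝕂}
    (h : A *ᵥ v = c • v) : exp A *ᵥ v = exp c • v := by
  have hA : HasSum (fun k : ℕ => ((k.factorial⁻¹ : 𝕂) • A ^ k) *ᵥ v) (exp A *ᵥ v) :=
    (exp_series_hasSum_exp' (𝕂 := 𝕂) A).map (mulVec.addMonoidHomLeft v)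
      (continuous_id.matrix_mulVec continuous_const)
  have hc : HasSum (fun k : ℕ => ((k.factorial⁻¹ : 𝕂) • c ^ k) • v) (exp c • v) :=
    (exp_series_hasSum_exp' (𝕂 := 𝕂) c).smul_const v
  refine hA.unique ?_
  simpa only [smul_mulVec, pow_mulVec_of_mulVec_eq_smul h, smul_smul, smul_eq_mul] using hc

end Matrix

namespace SimpleGraph

variable {V : Type*} [Fintype V] [DecidableEq V] {G : SimpleGraph V} [DecidableRel G.Adj]

theorem lapMatrix_mulVec_single_of_isUniversal {R : Type*} [Ring R] {x : V}
    (hx : G.IsUniversal x) :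
    G.lapMatrix R *ᵥ Pi.single x 1 = (Fintype.card V : R) • Pi.single x 1 - fun _ => 1 := by
  have hdeg : G.degree x + 1 = Fintype.card V := by
    rw [(G.degree_eq_card_sub_one x).mpr hx, Nat.sub_add_cancel (Fintype.card_pos_iff.mpr ⟨x⟩)]
  ext y
  rw [mulVec_single_one]
  rcases eq_or_ne y x with rfl | hy
  · simp [lapMatrix, degMatrix, ← hdeg]
  · simp [lapMatrix, degMatrix, hy, (hx hy.symm).symm]

theorem exp_smul_lapMatrix_apply_self_of_isUniversal {𝕂 : Type*} [RCLike 𝕂] {x : V}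
    (hx : G.IsUniversal x) (c : 𝕂) :
    exp (c • G.lapMatrix 𝕂) x x =
      exp (c * Fintype.card V) * (1 - (Fintype.card V : 𝕂)⁻¹) + (Fintype.card V : 𝕂)⁻¹ := by
  have hL := lapMatrix_mulVec_single_of_isUniversal (R := 𝕂) hx
  set n : 𝕂 := (Fintype.card V : 𝕂)
  have hn : n ≠ 0 := Nat.cast_ne_zero.mpr (Fintype.card_pos_iff.mpr ⟨x⟩).ne'
  set e : V → 𝕂 := Pi.single x 1
  set one : V → 𝕂 := fun _ => 1
  have h_kernel : (c • G.lapMatrix 𝕂) *ᵥ one = (0 : 𝕂) • one := by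
    rw [smul_mulVec, lapMatrix_mulVec_const_eq_zero, smul_zero, zero_smul]
  have h_eigen : (c • G.lapMatrix 𝕂) *ᵥ (e - n⁻¹ • one) = (c * n) • (e - n⁻¹ • one) := by
    rw [smul_mulVec, mulVec_sub, mulVec_smul, hL, lapMatrix_mulVec_const_eq_zero]
    match_scalars <;> field_simp
  have h_exp : exp (c • G.lapMatrix 𝕂) *ᵥ e = exp (c * n) • (e - n⁻¹ • one) + n⁻¹ • one := by
    conv_lhs => rw [← sub_add_cancel e (n⁻¹ • one)]
    rw [mulVec_add, mulVec_smul, exp_mulVec_of_mulVec_eq_smul h_eigen,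
      exp_mulVec_of_mulVec_eq_smul h_kernel, exp_zero, one_smul]
  rw [← col_apply (exp (c • G.lapMatrix 𝕂)) x x, ← mulVec_single_one, h_exp]
  simp [e, one, mul_sub]

end SimpleGraph

theorem ctqwP_self_of_isUniversal {V : Type*} [Fintype V] [DecidableEq V] {G : SimpleGraph V}
    [DecidableRel G.Adj] {x : V} (hx : G.IsUniversal x) (t : ℝ) :
    ctqwP G t x x = ‖Complex.exp (Complex.I * t * Fintype.card V) *
      (1 - (Fintype.card V : ℂ)⁻¹) + (Fintype.card V : ℂ)⁻¹‖ ^ 2 := by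
  rw [ctqwP, G.exp_smul_lapMatrix_apply_self_of_isUniversal hx, Complex.exp_eq_exp_ℂ]

theorem tendsto_norm_mul_one_sub_add_nhds_one {ι 𝕜 : Type*} [SeminormedRing 𝕜] {l : Filter ι}
    {u a : ι → 𝕜} (hu : ∀ i, ‖u i‖ = 1) (ha : Tendsto a l (nhds 0)) :
    Tendsto (fun i => ‖u i * (1 - a i) + a i‖) l (nhds 1) := by
  rw [tendsto_iff_norm_sub_tendsto_zero]
  refine squeeze_zero (fun _ => norm_nonneg _) (fun i => ?_)
    (by simpa using ha.norm.const_mul (‖(1 : 𝕜)‖ + 1))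
  calc ‖‖u i * (1 - a i) + a i‖ - 1‖ = |‖u i * (1 - a i) + a i‖ - ‖u i‖| := by
        rw [hu, Real.norm_eq_abs]
    _ ≤ ‖u i * (1 - a i) + a i - u i‖ := abs_norm_sub_norm_le _ _
    _ = ‖(1 - u i) * a i‖ := by noncomm_ring
    _ ≤ (‖(1 : 𝕜)‖ + 1) * ‖a i‖ := by grw [norm_mul_le, norm_sub_le, hu]

theorem ctqw_strong_localization_dominating_general
    (G : (m : ℕ) → SimpleGraph (Fin (m + 1)))
    (hdec : ∀ m, DecidableRel (G m).Adj)
    (x : (m : ℕ) → Fin (m + 1))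
    (hx : ∀ m, (G m).degree (x m) = m)
    (t : ℝ) :
    Tendsto (fun m => @ctqwP _ _ _ (G m) (hdec m) t (x m) (x m)) atTop (nhds 1) := by
  have h_univ (m : ℕ) : (G m).IsUniversal (x m) := by
    rw [← SimpleGraph.degree_eq_card_sub_one, hx, Fintype.card_fin, Nat.add_sub_cancel]
  have h_phase (m : ℕ) : ‖Complex.exp (Complex.I * t * (m + 1 : ℕ))‖ = 1 := by
    rw [← Complex.norm_exp_ofReal_mul_I (t * (m + 1 : ℕ))]
    push_cast
    ring_nf
  have h_inv : Tendsto (fun m : ℕ => ((m + 1 : ℕ) : ℂ)⁻¹) atTop (nhds 0) :=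
    (tendsto_inv_atTop_nhds_zero_nat (𝕜 := ℂ)).comp (tendsto_add_atTop_nat 1)
  have h_return (m : ℕ) := @ctqwP_self_of_isUniversal _ _ _ (G m) (hdec m) _ (h_univ m) t
  simp only [Fintype.card_fin] at h_return
  simpa [h_return] using (tendsto_norm_mul_one_sub_add_nhds_one h_phase h_inv).pow 2

/-- Strong localization at dominating vertices: the return probability tends to `1`. -/
theorem ctqw_strong_localization_dominating
    (G : (m : ℕ) → SimpleGraph (Fin (m + 1)))
    (hdec : ∀ m, DecidableRel (G m).Adj)
    (x : (m : ℕ) → Fin (m + 1))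
    (hx : ∀ m, (G m).degree (x m) = m)
    (t : ℝ) (ht : 0 ≤ t) :
    Tendsto (fun m => @ctqwP _ _ _ (G m) (hdec m) t (x m) (x m)) atTop (nhds 1) :=
  ctqw_strong_localization_dominating_general G hdec x hx t
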